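/- arXiv:2402.06276 — 3 statements merged into one kernel-verified Lean document; each statement's English description precedes it below -/
import Mathlib

section
/- Let m ≥ 1 and n ≥ 1 be natural numbers, let σ_f > 0 and σ > 0 be reals, and let Σ₁, …, Σₙ be positive semidefinite real m×m matrices whose diagonal entries satisfy (Σᵢ)ⱼⱼ ≤ σ_f² for all i and j. Set C = 2·σ_f^{2m} / log(1 + σ^{−2m}·σ_f^{2m}) and suppose γ ∈ ℝ satisfies (1/2)·∑_{i=1}^{n} log det(I_m + σ^{−2}·Σᵢ) ≤ γ. Then (1/n)·∑_{i=1}^{n} det Σᵢ ≤ C·γ/n. -/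
/-!
Diagonalising a covariance matrix `Σ` with eigenvalues `λⱼ ≥ 0` gives `det Σ = ∏ λⱼ` and
`det (1 + σ⁻² Σ) = ∏ (1 + σ⁻² λⱼ) ≥ 1 + σ^{-2m} det Σ`. By AM-GM, `det Σ ≤ (tr Σ / m) ^ m ≤ σf^{2m}`,
and on `[0, σf^{2m}]` the concave function `x ↦ log (1 + σ^{-2m} x)` lies above its chord, so
`det Σ ≤ C · (1/2) log det (1 + σ⁻² Σ)`. Summing over the trajectories gives the bound.
-/

open Finset

theorem Finset.one_add_prod_le_prod_one_add {ι : Type*} {s : Finset ι} (hs : s.Nonempty)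
    {a : ι → ℝ} (ha : ∀ i ∈ s, 0 ≤ a i) : 1 + ∏ i ∈ s, a i ≤ ∏ i ∈ s, (1 + a i) := by
  rw [prod_one_add]
  simpa using add_le_sum (fun t ht ↦ prod_nonneg fun i hi ↦ ha i (mem_powerset.1 ht hi))
    (empty_mem_powerset s) (mem_powerset_self s) hs.ne_empty.symm

theorem Real.prod_le_pow_card_of_sum_le {ι : Type*} {s : Finset ι} {z : ι → ℝ} {a : ℝ}
    (hz : ∀ i ∈ s, 0 ≤ z i) (hsum : ∑ i ∈ s, z i ≤ #s * a) : ∏ i ∈ s, z i ≤ a ^ #s := by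
  rcases s.eq_empty_or_nonempty with rfl | hs
  · simp
  have hcard : (0 : ℝ) < #s := by exact_mod_cast hs.card_pos
  have amgm := Real.geom_mean_le_arith_mean s 1 z (fun _ _ ↦ zero_le_one) (by simpa using hcard) hz
  simp only [Pi.one_apply, Real.rpow_one, sum_const, nsmul_eq_mul, mul_one, one_mul] at amgm
  calc ∏ i ∈ s, z i = ((∏ i ∈ s, z i) ^ ((#s : ℝ)⁻¹)) ^ #s :=
        (Real.rpow_inv_natCast_pow (prod_nonneg hz) hs.card_pos.ne').symm
    _ ≤ a ^ #s := by
        gcongr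
        · exact Real.rpow_nonneg (prod_nonneg hz) _
        · exact amgm.trans ((div_le_iff₀' hcard).2 hsum)

theorem ConcaveOn.mul_apply_le_mul_apply {f : ℝ → ℝ} {K x : ℝ}
    (hf : ConcaveOn ℝ (Set.Icc 0 K) f) (hf0 : 0 ≤ f 0) (hx : x ∈ Set.Icc 0 K) :
    x * f K ≤ K * f x := by
  obtain ⟨hx0, hxK⟩ := hx
  rcases hx0.trans hxK |>.eq_or_lt with rfl | hK
  · simp [le_antisymm hxK hx0]
  have ht0 : 0 ≤ x / K := div_nonneg hx0 hK.le
  have ht1 : 0 ≤ 1 - x / K := sub_nonneg.2 ((div_le_one hK).2 hxK)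
  have hconc := hf.2 (Set.left_mem_Icc.2 hK.le) (Set.right_mem_Icc.2 hK.le) ht1 ht0
    (sub_add_cancel 1 (x / K))
  simp only [smul_eq_mul, mul_zero, zero_add, div_mul_cancel₀ x hK.ne'] at hconc
  have hchord : x / K * f K ≤ f x := by linarith [mul_nonneg ht1 hf0]
  calc x * f K = K * (x / K * f K) := by field_simp
    _ ≤ K * f x := by gcongr

theorem Real.concaveOn_log_one_add_mul {D : ℝ} (hD : 0 ≤ D) :
    ConcaveOn ℝ (Set.Ici 0) fun x ↦ Real.log (1 + D * x) := by
  have := strictConcaveOn_log_Ioi.concaveOn.comp_affineMap (AffineMap.lineMap (1 : ℝ) (1 + D))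
  refine (this.subset (fun x hx ↦ ?_) (convex_Ici 0)).congr fun x _ ↦ ?_
  · simp only [Set.mem_preimage, AffineMap.lineMap_apply_ring', Set.mem_Ioi]
    nlinarith [mul_nonneg (Set.mem_Ici.1 hx) hD]
  · simp only [Function.comp_apply, AffineMap.lineMap_apply_ring']
    ring_nf

section Matrix

variable {ι : Type*} [Fintype ι] [DecidableEq ι] {A : Matrix ι ι ℝ}

theorem Matrix.IsHermitian.det_one_add_smul (hA : A.IsHermitian) (c : ℝ) :
    (1 + c • A).det = ∏ i, (1 + c * hA.eigenvalues i) := by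
  have hcfc : cfc (fun x : ℝ ↦ 1 + c * x) A = 1 + c • A := by
    rw [cfc_add A (fun _ ↦ 1) (fun x ↦ c * x), cfc_const_mul_id c A,
      cfc_const_one ℝ A hA.isSelfAdjoint]
  rw [← hcfc, hA.cfc_eq]
  simp [IsHermitian.cfc, -Unitary.conjStarAlgAut_apply]

theorem Matrix.PosSemidef.one_add_pow_mul_det_le_det_one_add_smul [Nonempty ι]
    (hA : A.PosSemidef) {c : ℝ} (hc : 0 ≤ c) :
    1 + c ^ Fintype.card ι * A.det ≤ (1 + c • A).det := by
  rw [hA.isHermitian.det_one_add_smul, hA.isHermitian.det_eq_prod_eigenvalues,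
    ← card_univ, ← prod_const, ← prod_mul_distrib]
  exact one_add_prod_le_prod_one_add univ_nonempty
    fun i _ ↦ mul_nonneg hc (hA.eigenvalues_nonneg i)

theorem Matrix.PosSemidef.det_le_pow_of_diag_le (hA : A.PosSemidef) {b : ℝ}
    (hb : ∀ i, A i i ≤ b) : A.det ≤ b ^ Fintype.card ι := by
  rw [hA.isHermitian.det_eq_prod_eigenvalues, ← card_univ]
  refine Real.prod_le_pow_card_of_sum_le (fun i _ ↦ hA.eigenvalues_nonneg i) ?_
  have htrace := hA.isHermitian.trace_eq_sum_eigenvalues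
  simp only [RCLike.ofReal_real_eq_id, id_eq] at htrace ⊢
  rw [← htrace, Matrix.trace, ← nsmul_eq_mul, ← sum_const]
  exact sum_le_sum fun i _ ↦ hb i

theorem Matrix.PosSemidef.det_mul_log_one_add_le [Nonempty ι] (hA : A.PosSemidef) {b c : ℝ}
    (hb : ∀ i, A i i ≤ b) (hc : 0 ≤ c) :
    A.det * Real.log (1 + c ^ Fintype.card ι * b ^ Fintype.card ι) ≤
      b ^ Fintype.card ι * Real.log (1 + c • A).det := by
  have hdet_le := hA.det_le_pow_of_diag_le hb
  have hchord := ((Real.concaveOn_log_one_add_mul (pow_nonneg hc (Fintype.card ι))).subset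
    Set.Icc_subset_Ici_self (convex_Icc 0 (b ^ Fintype.card ι))).mul_apply_le_mul_apply
    (by simp) ⟨hA.det_nonneg, hdet_le⟩
  have hpos : 0 < 1 + c ^ Fintype.card ι * A.det :=
    add_pos_of_pos_of_nonneg one_pos (mul_nonneg (pow_nonneg hc _) hA.det_nonneg)
  exact hchord.trans <| mul_le_mul_of_nonneg_left
    (Real.log_le_log hpos (hA.one_add_pow_mul_det_le_det_one_add_smul hc))
    (hA.det_nonneg.trans hdet_le)

end Matrix

theorem average_det_le_info_gain_general
    (m n : ℕ) (hm : 1 ≤ m) (σf σ : ℝ) (hσf : 0 < σf) (hσ : 0 < σ)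
    (S : Fin n → Matrix (Fin m) (Fin m) ℝ)
    (hpsd : ∀ i, (S i).PosSemidef)
    (hdiag : ∀ i j, S i j j ≤ σf ^ 2)
    (γ : ℝ)
    (hγ : (1 / 2 : ℝ) * ∑ i, Real.log ((1 + (σ ^ 2)⁻¹ • S i).det) ≤ γ) :
    (1 / n : ℝ) * ∑ i, (S i).det ≤
      (2 * σf ^ (2 * m) / Real.log (1 + (σ ^ (2 * m))⁻¹ * σf ^ (2 * m))) * γ / n := by
  have : Nonempty (Fin m) := ⟨⟨0, hm⟩⟩
  set K := σf ^ (2 * m)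
  set L := Real.log (1 + (σ ^ (2 * m))⁻¹ * K)
  have hL : 0 < L := Real.log_pos (lt_add_of_pos_right 1 (by positivity))
  have hterm (i : Fin n) : (S i).det * L ≤ K * Real.log ((1 + (σ ^ 2)⁻¹ • S i).det) := by
    have h := (hpsd i).det_mul_log_one_add_le (hdiag i) (c := (σ ^ 2)⁻¹) (by positivity)
    rwa [Fintype.card_fin, inv_pow, ← pow_mul, ← pow_mul] at h
  have hsum : ∑ i, (S i).det ≤ 2 * K / L * γ := by
    rw [div_mul_eq_mul_div, le_div_iff₀ hL, sum_mul]
    calc ∑ i, (S i).det * L ≤ ∑ i, K * Real.log ((1 + (σ ^ 2)⁻¹ • S i).det) :=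
          sum_le_sum fun i _ ↦ hterm i
      _ = K * ∑ i, Real.log ((1 + (σ ^ 2)⁻¹ • S i).det) := (mul_sum _ _ _).symm
      _ ≤ K * (2 * γ) := by gcongr; linarith
      _ = 2 * K * γ := by ring
  calc (1 / n : ℝ) * ∑ i, (S i).det ≤ (1 / n) * (2 * K / L * γ) := by gcongr
    _ = 2 * K / L * γ / n := by ring

/-- Lemma 2 of the paper, average predictive-variance bound:
if the positive semidefinite `m × m` covariance matrices `S 1, …, S n` have diagonal
entries bounded by `σf ^ 2` and the mutual information
`(1/2) ∑ i, log det (I + σ⁻² • S i)` is at most `γ`, then the average determinant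
`(1/n) ∑ i, det (S i)` is at most `C * γ / n` with
`C = 2 σf^{2m} / log (1 + σ^{-2m} σf^{2m})`. -/
theorem average_det_le_info_gain
    (m n : ℕ) (hm : 1 ≤ m) (hn : 1 ≤ n) (σf σ : ℝ) (hσf : 0 < σf) (hσ : 0 < σ)
    (S : Fin n → Matrix (Fin m) (Fin m) ℝ)
    (hpsd : ∀ i, (S i).PosSemidef)
    (hdiag : ∀ i j, S i j j ≤ σf ^ 2)
    (γ : ℝ)
    (hγ : (1 / 2 : ℝ) * ∑ i, Real.log ((1 + (σ ^ 2)⁻¹ • S i).det) ≤ γ) :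
    (1 / n : ℝ) * ∑ i, (S i).det ≤
      (2 * σf ^ (2 * m) / Real.log (1 + (σ ^ (2 * m))⁻¹ * σf ^ (2 * m))) * γ / n :=
  average_det_le_info_gain_general m n hm σf σ hσf hσ S hpsd hdiag γ hγ
end

section
/- Let m ≥ 1 and d be natural numbers, let σ_f > 0 and σ > 0 be reals, and let Σ : ℕ → (real m×m matrices) be a sequence such that each Σᵢ is positive semidefinite with all diagonal entries at most σ_f². Suppose there is a constant D > 0 such that for every n ≥ 2, (1/2)·∑_{i=1}^{n} log det(I_m + σ^{−2}·Σᵢ) ≤ D·(log n)^{d+1}. Then (1/n)·∑_{i=1}^{n} det Σᵢ → 0 as n → ∞. -/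
/-!
Scale `Bᵢ = σ⁻² Sᵢ`. For positive semidefinite `B`, expanding `det (1 + B) = ∏ (1 + λⱼ)` in the
eigenvalues gives `1 + det B ≤ det (1 + B)`, while the diagonal bound caps `det B ≤ (tr B) ^ m`
by a constant `T`. Since `t ≤ (1 + T) log (1 + t)` on `[0, T]`, each `det Sᵢ` is at most a fixed
multiple of the information gain `log det (1 + Bᵢ)`, so `∑ᵢ₌₁ⁿ det Sᵢ = O((log n) ^ (d + 1))`,
and dividing by `n` sends it to `0`.
-/

open Matrix Filter Topology Finset

lemma le_mul_log_one_add {t T : ℝ} (ht : 0 ≤ t) (htT : t ≤ T) :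
    t ≤ (1 + T) * Real.log (1 + t) := by
  have hpos : 0 < 1 + t := by linarith
  calc t = (1 + t) * (1 - (1 + t)⁻¹) := by field_simp; ring
    _ ≤ (1 + T) * Real.log (1 + t) := by
      gcongr
      · exact sub_nonneg.mpr (inv_le_one_of_one_le₀ (by linarith))
      · linarith
      · exact Real.one_sub_inv_le_log_of_pos hpos

lemma tendsto_average_zero_of_sum_le_polylog {a : ℕ → ℝ} (ha : ∀ i, 0 ≤ a i) {C : ℝ} {k : ℕ}
    (h : ∀ᶠ n in atTop, ∑ i ∈ Icc 1 n, a i ≤ C * Real.log n ^ k) :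
    Tendsto (fun n : ℕ => (1 / n : ℝ) * ∑ i ∈ Icc 1 n, a i) atTop (𝓝 0) := by
  have hpolylog : Tendsto (fun n : ℕ => C * (Real.log n ^ k / n)) atTop (𝓝 0) := by
    have := (Real.tendsto_pow_log_div_mul_add_atTop 1 0 k one_ne_zero).comp
      tendsto_natCast_atTop_atTop
    simpa using this.const_mul C
  refine tendsto_of_tendsto_of_tendsto_of_le_of_le' tendsto_const_nhds hpolylog
    (Eventually.of_forall fun n => mul_nonneg (by positivity) (sum_nonneg fun i _ => ha i)) ?_
  filter_upwards [h] with n hn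
  calc (1 / n : ℝ) * ∑ i ∈ Icc 1 n, a i ≤ (1 / n) * (C * Real.log n ^ k) := by gcongr
    _ = C * (Real.log n ^ k / n) := by ring

namespace Matrix

variable {n 𝕜 : Type*} [Fintype n] [DecidableEq n] [RCLike 𝕜] {A : Matrix n n 𝕜}

lemma IsHermitian.det_cfc (hA : A.IsHermitian) (f : ℝ → ℝ) :
    (cfc f A).det = ∏ i, (f (hA.eigenvalues i) : 𝕜) := by
  simp [hA.cfc_eq, IsHermitian.cfc, -Unitary.conjStarAlgAut_apply]

lemma IsHermitian.det_one_add (hA : A.IsHermitian) :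
    (1 + A).det = ∏ i, (1 + (hA.eigenvalues i : 𝕜)) := by
  have h : 1 + A = cfc (fun x : ℝ => 1 + x) A := by
    rw [cfc_const_add _ _ A, cfc_id' ℝ A, algebraMap_eq_diagonal]
    simp
  simp [h, hA.det_cfc]

namespace PosSemidef

variable {B : Matrix n n ℝ}

lemma one_add_det_le_det_one_add [Nonempty n] (hB : B.PosSemidef) :
    1 + B.det ≤ (1 + B).det := by
  have hev := hB.eigenvalues_nonneg
  rw [hB.isHermitian.det_one_add, hB.isHermitian.det_eq_prod_eigenvalues]
  simpa using prod_add_prod_le (mem_univ (Classical.arbitrary n)) (g := 1)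
    (h := hB.1.eigenvalues) (f := fun i => 1 + hB.1.eigenvalues i) le_rfl
    (fun j _ _ => by simp [hev j]) (fun j _ _ => by simp) (by simp) (fun j _ => hev j)

lemma det_le_trace_pow (hB : B.PosSemidef) : B.det ≤ B.trace ^ Fintype.card n := by
  have hev := hB.eigenvalues_nonneg
  rw [hB.isHermitian.det_eq_prod_eigenvalues, hB.isHermitian.trace_eq_sum_eigenvalues]
  simp only [RCLike.ofReal_real_eq_id, id]
  calc ∏ i, hB.1.eigenvalues i ≤ ∏ _i : n, ∑ j, hB.1.eigenvalues j :=
        prod_le_prod (fun i _ => hev i) fun i _ => single_le_sum (fun j _ => hev j) (mem_univ i)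
    _ = (∑ j, hB.1.eigenvalues j) ^ Fintype.card n := by rw [prod_const, card_univ]

lemma det_le_of_diag_le (hB : B.PosSemidef) {c : ℝ} (hc : ∀ j, B j j ≤ c) :
    B.det ≤ (Fintype.card n * c) ^ Fintype.card n := by
  refine hB.det_le_trace_pow.trans (pow_le_pow_left₀ hB.trace_nonneg ?_ _)
  exact (sum_le_card_nsmul univ B.diag c fun j _ => hc j).trans_eq (by simp)

lemma det_le_mul_log_det_one_add [Nonempty n] (hB : B.PosSemidef) {T : ℝ} (hT : B.det ≤ T) :
    B.det ≤ (1 + T) * Real.log (1 + B).det := by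
  have h0 := hB.det_nonneg
  calc B.det ≤ (1 + T) * Real.log (1 + B.det) := le_mul_log_one_add h0 hT
    _ ≤ (1 + T) * Real.log (1 + B).det := by
      gcongr
      · linarith
      · exact hB.one_add_det_le_det_one_add

end PosSemidef

end Matrix

theorem average_det_tendsto_zero_of_info_gain_polylog_general
    (m d : ℕ) (hm : 1 ≤ m) (σf σ : ℝ) (hσ : 0 < σ)
    (S : ℕ → Matrix (Fin m) (Fin m) ℝ)
    (hpsd : ∀ i, (S i).PosSemidef)
    (hdiag : ∀ i j, S i j j ≤ σf ^ 2)
    (D : ℝ)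
    (hinfo : ∀ n : ℕ, 2 ≤ n →
      (1 / 2 : ℝ) * ∑ i ∈ Finset.Icc 1 n, Real.log ((1 + (σ ^ 2)⁻¹ • S i).det) ≤
        D * Real.log n ^ (d + 1)) :
    Filter.Tendsto (fun n : ℕ => (1 / n : ℝ) * ∑ i ∈ Finset.Icc 1 n, (S i).det)
      Filter.atTop (nhds 0) := by
  have : Nonempty (Fin m) := ⟨⟨0, hm⟩⟩
  set c : ℝ := (σ ^ 2)⁻¹
  set T : ℝ := (m * (c * σf ^ 2)) ^ m
  have hB : ∀ i, (c • S i).PosSemidef := fun i => (hpsd i).smul (by positivity)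
  have hBT : ∀ i, (c • S i).det ≤ T := fun i => by
    simpa using (hB i).det_le_of_diag_le fun j => by
      simpa using mul_le_mul_of_nonneg_left (hdiag i j) (by positivity : 0 ≤ c)
  have hdet : ∀ i, (S i).det ≤ (σ ^ 2) ^ m * (1 + T) * Real.log (1 + c • S i).det := fun i => by
    have hscale : (S i).det = (σ ^ 2) ^ m * (c • S i).det := by
      rw [det_smul, Fintype.card_fin, ← mul_assoc, ← mul_pow, mul_inv_cancel₀ (by positivity),
        one_pow, one_mul]
    rw [hscale, mul_assoc]
    exact mul_le_mul_of_nonneg_left ((hB i).det_le_mul_log_det_one_add (hBT i)) (by positivity)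
  refine tendsto_average_zero_of_sum_le_polylog (fun i => (hpsd i).det_nonneg)
    (C := (σ ^ 2) ^ m * (1 + T) * (2 * D)) (k := d + 1) ?_
  filter_upwards [eventually_ge_atTop 2] with n hn
  calc ∑ i ∈ Icc 1 n, (S i).det
      ≤ (σ ^ 2) ^ m * (1 + T) * ∑ i ∈ Icc 1 n, Real.log (1 + c • S i).det := by
        rw [mul_sum]
        exact sum_le_sum fun i _ => hdet i
    _ ≤ (σ ^ 2) ^ m * (1 + T) * (2 * D) * Real.log n ^ (d + 1) := by
        rw [mul_assoc _ (2 * D)]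
        gcongr
        linarith [hinfo n hn]

/-- Lemma 2 combined with Theorems 2/3 of the paper:
if the positive semidefinite covariance matrices `S i` have diagonal entries bounded
by `σf ^ 2` and the mutual information `(1/2) ∑_{i=1}^n log det (I + σ⁻² • S i)` is at
most `D * (log n)^(d+1)` for all `n ≥ 2`, then the average determinant
`(1/n) ∑_{i=1}^n det (S i)` tends to `0`. -/
theorem average_det_tendsto_zero_of_info_gain_polylog
    (m d : ℕ) (hm : 1 ≤ m) (σf σ : ℝ) (hσf : 0 < σf) (hσ : 0 < σ)
    (S : ℕ → Matrix (Fin m) (Fin m) ℝ)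
    (hpsd : ∀ i, (S i).PosSemidef)
    (hdiag : ∀ i j, S i j j ≤ σf ^ 2)
    (D : ℝ) (hD : 0 < D)
    (hinfo : ∀ n : ℕ, 2 ≤ n →
      (1 / 2 : ℝ) * ∑ i ∈ Finset.Icc 1 n, Real.log ((1 + (σ ^ 2)⁻¹ • S i).det) ≤
        D * Real.log n ^ (d + 1)) :
    Filter.Tendsto (fun n : ℕ => (1 / n : ℝ) * ∑ i ∈ Finset.Icc 1 n, (S i).det)
      Filter.atTop (nhds 0) :=
  average_det_tendsto_zero_of_info_gain_polylog_general m d hm σf σ hσ S hpsd hdiag D hinfo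
end

section
/- Let m ≥ 1 be a natural number, σ_f > 0 and σ > 0 reals, and let Σ be a positive semidefinite real m×m matrix with all diagonal entries at most σ_f². Set C₁ = σ_f^{2m} / log(1 + σ^{−2m}·σ_f^{2m}). Then det Σ ≤ C₁ · log(1 + σ^{−2m}·det Σ). -/
open Matrix

/-!
The eigenvalues of `S` are nonnegative with sum `tr S ≤ m σf²`, so by AM–GM
`det S ≤ (tr S / m)^m ≤ σf^{2m}`. The claim is then the concavity of `x ↦ log (1 + σ^{-2m} x)`,
which vanishes at `0`: on `[0, σf^{2m}]` it lies above its chord through `0` and `σf^{2m}`.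
-/

namespace Real

theorem prod_le_sum_div_card_pow {ι : Type*} (s : Finset ι) {z : ι → ℝ}
    (hz : ∀ i ∈ s, 0 ≤ z i) :
    ∏ i ∈ s, z i ≤ ((∑ i ∈ s, z i) / s.card) ^ s.card := by
  obtain rfl | hs := s.eq_empty_or_nonempty
  · simp
  have hcard : (0 : ℝ) < s.card := by exact_mod_cast hs.card_pos
  have amgm := geom_mean_le_arith_mean s (fun _ ↦ 1) z (fun _ _ ↦ zero_le_one)
    (by simpa using hcard) hz
  simp only [rpow_one, one_mul, Finset.sum_const, nsmul_eq_mul, mul_one] at amgm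
  calc ∏ i ∈ s, z i = ((∏ i ∈ s, z i) ^ (s.card : ℝ)⁻¹) ^ s.card := by
        rw [← rpow_natCast, ← rpow_mul (Finset.prod_nonneg hz), inv_mul_cancel₀ hcard.ne',
          rpow_one]
    _ ≤ ((∑ i ∈ s, z i) / s.card) ^ s.card :=
        pow_le_pow_left₀ (rpow_nonneg (Finset.prod_nonneg hz) _) amgm _

theorem mul_log_one_add_le_log_one_add_mul {x t : ℝ} (hx : -1 < x) (ht₀ : 0 ≤ t) (ht₁ : t ≤ 1) :
    t * log (1 + x) ≤ log (1 + t * x) := by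
  have hx' : 0 < 1 + x := by linarith
  rw [← log_rpow hx']
  exact log_le_log (by positivity) (rpow_one_add_le_one_add_mul_self hx.le ht₀ ht₁)

theorem mul_log_one_add_mul_le {a b d : ℝ} (ha : 0 ≤ a) (hd : 0 ≤ d) (hdb : d ≤ b) :
    d * log (1 + a * b) ≤ b * log (1 + a * d) := by
  obtain rfl | hb := (hd.trans hdb).eq_or_lt
  · simp [le_antisymm hdb hd]
  have hchord := mul_log_one_add_le_log_one_add_mul (x := a * b)
    (by nlinarith) (div_nonneg hd hb.le) (div_le_one_of_le₀ hdb hb.le)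
  calc d * log (1 + a * b) = b * (d / b * log (1 + a * b)) := by field_simp
    _ ≤ b * log (1 + d / b * (a * b)) := by gcongr
    _ = b * log (1 + a * d) := by field_simp

end Real

namespace Matrix.PosSemidef

variable {n : Type*} [Fintype n] [DecidableEq n] {A : Matrix n n ℝ}

theorem det_le_trace_div_card_pow (hA : A.PosSemidef) :
    A.det ≤ (A.trace / Fintype.card n) ^ Fintype.card n := by
  simpa [hA.1.det_eq_prod_eigenvalues, hA.1.trace_eq_sum_eigenvalues] using
    Real.prod_le_sum_div_card_pow Finset.univ fun i _ ↦ hA.eigenvalues_nonneg i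

theorem det_le_pow_of_diag_le_s4 (hA : A.PosSemidef) {c : ℝ} (hc : ∀ i, A i i ≤ c) :
    A.det ≤ c ^ Fintype.card n := by
  obtain hn | hn := isEmpty_or_nonempty n
  · simp
  have hcard : (0 : ℝ) < Fintype.card n := by exact_mod_cast Fintype.card_pos
  have htrace : A.trace / Fintype.card n ≤ c := by
    rw [div_le_iff₀' hcard]
    simpa [Matrix.trace] using Finset.sum_le_sum fun i (_ : i ∈ Finset.univ) ↦ hc i
  exact hA.det_le_trace_div_card_pow.trans
    (pow_le_pow_left₀ (div_nonneg hA.trace_nonneg hcard.le) htrace _)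

end Matrix.PosSemidef

theorem det_le_log_one_add_det_general
    (m : ℕ) (σf σ : ℝ) (hσf : 0 < σf) (hσ : 0 < σ)
    (S : Matrix (Fin m) (Fin m) ℝ)
    (hpsd : S.PosSemidef)
    (hdiag : ∀ j, S j j ≤ σf ^ 2) :
    S.det ≤ (σf ^ (2 * m) / Real.log (1 + (σ ^ (2 * m))⁻¹ * σf ^ (2 * m))) *
      Real.log (1 + (σ ^ (2 * m))⁻¹ * S.det) := by
  have hdet : S.det ≤ σf ^ (2 * m) := by
    simpa [pow_mul] using hpsd.det_le_pow_of_diag_le_s4 hdiag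
  have hlog : 0 < Real.log (1 + (σ ^ (2 * m))⁻¹ * σf ^ (2 * m)) :=
    Real.log_pos (by simp only [lt_add_iff_pos_right]; positivity)
  rw [div_mul_eq_mul_div, le_div_iff₀ hlog]
  exact Real.mul_log_one_add_mul_le (by positivity) hpsd.det_nonneg hdet

/-- Lemma 3 of the paper: for a positive semidefinite `m × m`
covariance matrix `S` with diagonal entries at most `σf ^ 2`, we have
`det S ≤ C₁ * log (1 + σ^{-2m} * det S)` with
`C₁ = σf^{2m} / log (1 + σ^{-2m} σf^{2m})`. -/
theorem det_le_log_one_add_det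
    (m : ℕ) (hm : 1 ≤ m) (σf σ : ℝ) (hσf : 0 < σf) (hσ : 0 < σ)
    (S : Matrix (Fin m) (Fin m) ℝ)
    (hpsd : S.PosSemidef)
    (hdiag : ∀ j, S j j ≤ σf ^ 2) :
    S.det ≤ (σf ^ (2 * m) / Real.log (1 + (σ ^ (2 * m))⁻¹ * σf ^ (2 * m))) *
      Real.log (1 + (σ ^ (2 * m))⁻¹ * S.det) :=
  det_le_log_one_add_det_general m σf σ hσf hσ S hpsd hdiag
end
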